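/- arXiv:1912.12684 — 2 statements merged into one kernel-verified Lean document; each statement's English description precedes it below -/
import Mathlib

section
/- Suppose a_1, a_2, …, a_N are distinct symbols in an alphabet Σ, N ≥ 20 and M ≥ 2 are integers, and for j = 1, …, M define the Feldman pattern B_j = (a_1^{N^{2j}} a_2^{N^{2j}} ⋯ a_N^{N^{2j}})^{N^{2M−2j+2}} (a string of length N^{2M+3}). If B and B̄ are strings of consecutive symbols in B_j and B_k respectively, where j ≠ k, |B| ≥ N^{2M+2} and |B̄| ≥ N^{2M+2}, then f̄(B, B̄) > 1 − 4/√N and f̃(B, B̄) > 1 − 12/√N. -/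
open MeasureTheory

namespace Paper

variable {σ : Type*}

/-- The concatenation of `t` copies of the string `w`. -/
def rep (w : List σ) (t : ℕ) : List σ := (List.replicate t w).flatten

/-- `I` is a match between the strings `a` and `b` (with 0-based indices):
a collection of pairs of indices, strictly increasing in both coordinates,
pairing equal symbols. -/
def IsMatch (a b : List σ) (I : List (ℕ × ℕ)) : Prop :=
  I.Chain' (fun p q => p.1 < q.1 ∧ p.2 < q.2) ∧
  ∀ p ∈ I, p.1 < a.length ∧ p.2 < b.length ∧ a[p.1]? = b[p.2]?

/-- The largest cardinality of a match between `a` and `b`. -/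
noncomputable def maxMatch (a b : List σ) : ℕ :=
  sSup {r | ∃ I, IsMatch a b I ∧ I.length = r}

/-- The `f̄` distance between two strings. -/
noncomputable def fbar (a b : List σ) : ℝ :=
  1 - 2 * (maxMatch a b : ℝ) / (a.length + b.length)

/-- `I` is an approximate match between the strings `a` and `b` (0-based indices):
pairs of indices, nondecreasing in each coordinate and strictly increasing as pairs,
pairing equal symbols, such that the set of indices paired with any given index is
contained in a set of three consecutive indices. -/
def IsApproxMatch (a b : List σ) (I : List (ℕ × ℕ)) : Prop :=
  I.Chain' (fun p q => p.1 ≤ q.1 ∧ p.2 ≤ q.2 ∧ p ≠ q) ∧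
  (∀ p ∈ I, p.1 < a.length ∧ p.2 < b.length ∧ a[p.1]? = b[p.2]?) ∧
  (∀ p ∈ I, (∃ s, ∀ q ∈ I, q.1 = p.1 → q.2 ∈ ({s, s+1, s+2} : Set ℕ)) ∧
            (∃ t, ∀ q ∈ I, q.2 = p.2 → q.1 ∈ ({t, t+1, t+2} : Set ℕ)))

/-- The largest cardinality of an approximate match between `a` and `b`. -/
noncomputable def maxApproxMatch (a b : List σ) : ℕ :=
  sSup {r | ∃ I, IsApproxMatch a b I ∧ I.length = r}

/-- The approximate distance `f̃` between two strings. -/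
noncomputable def ftilde (a b : List σ) : ℝ :=
  max 0 (1 - 2 * (maxApproxMatch a b : ℝ) / (a.length + b.length))

end Paper

open Paper List

/-- The `j`-th Feldman pattern on the symbols `a 0, …, a (N−1)`:
`B_j = (a₁^{N^{2j}} a₂^{N^{2j}} ⋯ a_N^{N^{2j}})^{N^{2M−2j+2}}`. -/
def feldmanPattern {σ : Type*} (N : ℕ) (a : Fin N → σ) (j M : ℕ) : List σ :=
  Paper.rep ((List.ofFn fun i : Fin N => List.replicate (N ^ (2 * j)) (a i)).flatten)
    (N ^ (2 * (M - j) + 2))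

/-!
In `B_j` the symbol at position `x` is `a ((x / d) mod N)` with `d = N^{2j}`, and for `k > j` the
runs of `B_k` have length `D = N^{2k} ≥ N²d`. Along an approximate match both coordinates are
monotone, hence so is the key `x / (dN) + y / D`; since the run of `y` in `B_k` fixes the symbol,
hence `(x / d) mod N`, two matched pairs with equal keys have `x` in the same run of `B_j`. So each
key carries at most `3d` pairs, while there are only about `|B|/(dN) + |B̄|/D` keys. This gives
`N·|Ĩ| ≤ 3(|B| + |B̄|)`, so both distances are at least `1 − 6/N`.
-/

theorem mul_sSup_le_of_forall_mul_le {s : Set ℕ} {n K : ℕ} (hn : 0 < n)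
    (h : ∀ r ∈ s, n * r ≤ K) : n * sSup s ≤ K :=
  calc n * sSup s ≤ n * (K / n) := Nat.mul_le_mul_left _ <|
        csSup_le' fun r hr => (Nat.le_div_iff_mul_le hn).2 (mul_comm r n ▸ h r hr)
    _ ≤ K := Nat.mul_div_le K n

namespace Paper

variable {σ : Type*} {a b : List σ} {I : List (ℕ × ℕ)}

theorem IsApproxMatch.pairwise_lt (h : IsApproxMatch a b I) : I.Pairwise (· < ·) :=
  List.isChain_iff_pairwise.1 <|
    h.1.imp fun _ _ hpq => lt_of_le_of_ne (Prod.le_def.2 ⟨hpq.1, hpq.2.1⟩) hpq.2.2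

theorem IsApproxMatch.isChain_le (h : IsApproxMatch a b I) : IsChain (· ≤ ·) {p | p ∈ I} :=
  have : Std.Symm fun p q : ℕ × ℕ => p ≤ q ∨ q ≤ p := ⟨fun _ _ => Or.symm⟩
  (h.pairwise_lt.imp fun hpq => Or.inl hpq.le).set_pairwise

open Finset in
theorem IsApproxMatch.card_filter_fst_eq_le_three (h : IsApproxMatch a b I) {p : ℕ × ℕ}
    (hp : p ∈ I) : #{q ∈ I.toFinset | q.1 = p.1} ≤ 3 := by
  obtain ⟨s, hs⟩ := (h.2.2 p hp).1
  calc #{q ∈ I.toFinset | q.1 = p.1}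
      ≤ #(({s, s + 1, s + 2} : Finset ℕ).image (Prod.mk p.1)) := by
        refine card_le_card fun q hq => ?_
        rw [Finset.mem_filter, List.mem_toFinset] at hq
        exact mem_image.2 ⟨q.2, by simpa using hs q hq.1 hq.2, by rw [← hq.2]⟩
    _ ≤ #({s, s + 1, s + 2} : Finset ℕ) := card_image_le
    _ ≤ 3 := card_le_three

theorem IsApproxMatch.swap (h : IsApproxMatch a b I) :
    IsApproxMatch b a (I.map Prod.swap) := by
  obtain ⟨hchain, hsym, hwin⟩ := h
  refine ⟨(List.isChain_map _).2 <| hchain.imp fun _ _ hpq =>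
      ⟨hpq.2.1, hpq.1, Prod.swap_injective.ne hpq.2.2⟩, ?_, ?_⟩
  · simp only [List.forall_mem_map]
    exact fun p hp => ⟨(hsym p hp).2.1, (hsym p hp).1, (hsym p hp).2.2.symm⟩
  · simp only [List.forall_mem_map, Prod.fst_swap, Prod.snd_swap]
    exact fun p hp => (hwin p hp).symm

theorem IsMatch.isApproxMatch (h : IsMatch a b I) : IsApproxMatch a b I := by
  obtain ⟨hchain, hsym⟩ := h
  have hfst : (I.map Prod.fst).Nodup :=
    (List.isChain_iff_pairwise.1 ((List.isChain_map _).2 (hchain.imp fun _ _ hpq => hpq.1))).nodup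
  have hsnd : (I.map Prod.snd).Nodup :=
    (List.isChain_iff_pairwise.1 ((List.isChain_map _).2 (hchain.imp fun _ _ hpq => hpq.2))).nodup
  refine ⟨hchain.imp fun _ _ hpq => ⟨hpq.1.le, hpq.2.le, fun he => hpq.1.ne congr($he.1)⟩,
    hsym,
    fun p hp => ⟨⟨p.2, fun q hq he => ?_⟩, ⟨p.1, fun q hq he => ?_⟩⟩⟩
  · simp [List.inj_on_of_nodup_map hfst hq hp he]
  · simp [List.inj_on_of_nodup_map hsnd hq hp he]

theorem mul_maxApproxMatch_le {n K : ℕ} (hn : 0 < n)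
    (h : ∀ I, IsApproxMatch a b I → n * I.length ≤ K) : n * maxApproxMatch a b ≤ K :=
  mul_sSup_le_of_forall_mul_le hn fun _ ⟨I, hI, hr⟩ => hr ▸ h I hI

theorem mul_maxMatch_le {n K : ℕ} (hn : 0 < n)
    (h : ∀ I, IsApproxMatch a b I → n * I.length ≤ K) : n * maxMatch a b ≤ K :=
  mul_sSup_le_of_forall_mul_le hn fun _ ⟨I, hI, hr⟩ => hr ▸ h I hI.isApproxMatch

end Paper

theorem List.getElem?_flatten_of_forall_length_eq {α : Type*} {L : List (List α)} {w : ℕ}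
    (hw : 0 < w) (h : ∀ l ∈ L, l.length = w) (q : ℕ) :
    L.flatten[q]? = L[q / w]?.bind (·[q % w]?) := by
  induction L generalizing q with
  | nil => simp
  | cons l L ih =>
    have hl := h l List.mem_cons_self
    rw [List.flatten_cons]
    rcases lt_or_ge q w with hq | hq
    · rw [List.getElem?_append_left (hl ▸ hq), Nat.div_eq_of_lt hq, Nat.mod_eq_of_lt hq]
      simp
    · obtain ⟨r, rfl⟩ : ∃ r, q = r + w := ⟨q - w, by omega⟩
      rw [List.getElem?_append_right (hl ▸ hq), hl, Nat.add_sub_cancel,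
        ih (fun l' hl' => h l' (List.mem_cons_of_mem _ hl')), Nat.add_div_right _ hw,
        Nat.add_mod_right]
      simp

theorem feldmanPattern_getElem? {σ : Type*} {N : ℕ} (hN : 0 < N) (a : Fin N → σ) (j M : ℕ)
    {q : ℕ} (hq : q < (feldmanPattern N a j M).length) :
    (feldmanPattern N a j M)[q]? = some (a ⟨q / N ^ (2 * j) % N, Nat.mod_lt _ hN⟩) := by
  set d := N ^ (2 * j)
  have hd : 0 < d := by positivity
  set blocks := (List.ofFn fun i : Fin N => List.replicate d (a i)).flatten
  have hblocks : blocks.length = N * d := by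
    simp [blocks, List.length_flatten, List.sum_ofFn]
  have hfp : feldmanPattern N a j M = (List.replicate (N ^ (2 * (M - j) + 2)) blocks).flatten :=
    rfl
  rw [hfp] at hq ⊢
  have hrep : q / (N * d) < N ^ (2 * (M - j) + 2) := by
    simp only [List.length_flatten, List.map_replicate, List.sum_replicate, hblocks,
      smul_eq_mul] at hq
    exact Nat.div_lt_of_lt_mul (by rwa [mul_comm])
  have hblock : q % (N * d) / d < N :=
    Nat.div_lt_of_lt_mul (mul_comm N d ▸ Nat.mod_lt _ (by positivity))
  rw [List.getElem?_flatten_of_forall_length_eq (w := N * d) (by positivity)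
      (fun l hl => List.eq_of_mem_replicate hl ▸ hblocks), List.getElem?_replicate, if_pos hrep,
    Option.bind_some, List.getElem?_flatten_of_forall_length_eq hd (by simp),
    List.getElem?_ofFn, dif_pos hblock, Option.bind_some, List.getElem?_replicate,
    if_pos (Nat.mod_lt _ hd)]
  simp only [mul_comm N, Nat.mod_mul_right_div_self]

theorem exists_getElem?_eq_of_infix_feldmanPattern {σ : Type*} {N : ℕ} (hN : 0 < N)
    {a : Fin N → σ} {j M : ℕ} {B : List σ} (hB : B <:+: feldmanPattern N a j M) :
    ∃ o, ∀ i < B.length, B[i]? = some (a ⟨(i + o) / N ^ (2 * j) % N, Nat.mod_lt _ hN⟩) := by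
  obtain ⟨o, hlen, hget⟩ := List.infix_iff_getElem?.1 hB
  exact ⟨o, fun i hi => by
    rw [List.getElem?_eq_getElem hi, ← hget i hi, feldmanPattern_getElem? hN a j M (by omega)]⟩

section BlockCounting

open Finset

variable {N d D o o' : ℕ}

theorem div_eq_div_of_div_mul_add_div_eq {x x' y y' : ℕ} (hx : x ≤ x') (hy : y ≤ y')
    (hxy : x / d % N = y / D % N) (hxy' : x' / d % N = y' / D % N)
    (h : x / (d * N) + y / D = x' / (d * N) + y' / D) : x / d = x' / d := by
  have hx' : x / (d * N) ≤ x' / (d * N) := Nat.div_le_div_right hx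
  have hy' : y / D ≤ y' / D := Nat.div_le_div_right hy
  rw [← Nat.div_div_eq_div_mul, ← Nat.div_div_eq_div_mul] at h hx'
  have hq : x / d / N = x' / d / N := by omega
  have hr : x / d % N = x' / d % N := by rw [hxy, hxy', show y / D = y' / D by omega]
  rw [← Nat.div_add_mod (x / d) N, ← Nat.div_add_mod (x' / d) N, hq, hr]

theorem card_le_of_div_mod_eq {s : Finset (ℕ × ℕ)} {m L L' : ℕ} (hd : 0 < d)
    (hchain : IsChain (· ≤ ·) (s : Set (ℕ × ℕ)))
    (hlt : ∀ p ∈ s, p.1 < L ∧ p.2 < L')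
    (hsym : ∀ p ∈ s, (p.1 + o) / d % N = (p.2 + o') / D % N)
    (hfiber : ∀ p ∈ s, #{q ∈ s | q.1 = p.1} ≤ m) :
    #s ≤ m * (d * (L / (d * N) + L' / D + 3)) := by
  set key : ℕ × ℕ → ℕ := fun p => (p.1 + o) / (d * N) + (p.2 + o') / D
  set f : ℕ × ℕ → ℕ × ℕ := fun p => (key p, (p.1 + o) % d)
  -- the key of `p` fixes the run `(p.1 + o) / d`, and the residue the position inside it
  have hfst : ∀ p ∈ s, ∀ q ∈ s, f p = f q → p.1 = q.1 := by
    intro p hp q hq hpq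
    have hrun : (p.1 + o) / d = (q.1 + o) / d := by
      rcases hchain.total hp hq with hle | hle
      · exact div_eq_div_of_div_mul_add_div_eq (Nat.add_le_add_right hle.1 o)
          (Nat.add_le_add_right hle.2 o') (hsym p hp) (hsym q hq) congr($hpq.1)
      · exact (div_eq_div_of_div_mul_add_div_eq (Nat.add_le_add_right hle.1 o)
          (Nat.add_le_add_right hle.2 o') (hsym q hq) (hsym p hp) congr($hpq.1).symm).symm
    have hmod : (p.1 + o) % d = (q.1 + o) % d := congr($hpq.2)
    have hp' := Nat.div_add_mod (p.1 + o) d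
    rw [hrun, hmod, Nat.div_add_mod] at hp'
    omega
  set lo := o / (d * N) + o' / D with hlo
  set hi := (L + o) / (d * N) + (L' + o') / D with hhi
  have himage : s.image f ⊆ Icc lo hi ×ˢ Finset.range d := by
    intro b hb
    obtain ⟨p, hp, rfl⟩ := mem_image.1 hb
    have hp1 := (hlt p hp).1
    have hp2 := (hlt p hp).2
    simp only [Finset.mem_product, mem_Icc, Finset.mem_range, f, key, lo, hi]
    refine ⟨⟨add_le_add (Nat.div_le_div_right (by omega)) (Nat.div_le_div_right (by omega)),
      add_le_add (Nat.div_le_div_right (by omega)) (Nat.div_le_div_right (by omega))⟩,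
      Nat.mod_lt _ hd⟩
  have hwidth : hi + 1 - lo ≤ L / (d * N) + L' / D + 3 := by
    have := Nat.add_div_le_div_add_div_add_one L o (d * N)
    have := Nat.add_div_le_div_add_div_add_one L' o' D
    exact Nat.sub_le_iff_le_add.2 (by linarith)
  calc #s ≤ m * #(s.image f) := card_le_mul_card_image s m fun b hb => by
          obtain ⟨p, hp, rfl⟩ := mem_image.1 hb
          exact (card_le_card fun q hq => by
            rw [Finset.mem_filter] at hq ⊢
            exact ⟨hq.1, hfst q hq.1 p hp hq.2⟩).trans (hfiber p hp)
    _ ≤ m * #(Icc lo hi ×ˢ Finset.range d) := by gcongr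
    _ = m * ((hi + 1 - lo) * d) := by rw [card_product, Nat.card_Icc, Finset.card_range]
    _ ≤ m * (d * (L / (d * N) + L' / D + 3)) := by rw [mul_comm _ d]; gcongr

theorem mul_le_of_le_mul_div_add_div {c m L L' : ℕ} (hN : 4 ≤ N) (hD : d * N * N ≤ D)
    (hL' : d * N * N ≤ L') (hc : c ≤ m * (d * (L / (d * N) + L' / D + 3))) :
    N * c ≤ m * (L + L') := by
  have hB : d * N * (L / (d * N)) ≤ L := Nat.mul_div_le L (d * N)
  have hB' : N * (d * N * (L' / D)) ≤ L' :=
    calc N * (d * N * (L' / D)) = d * N * N * (L' / D) := by ring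
      _ ≤ D * (L' / D) := Nat.mul_le_mul_right _ hD
      _ ≤ L' := Nat.mul_div_le L' D
  have hrest : d * N * (L' / D) + 3 * (d * N) ≤ L' := by
    refine Nat.le_of_mul_le_mul_left ?_ (by omega : 0 < N)
    nlinarith
  calc N * c ≤ N * (m * (d * (L / (d * N) + L' / D + 3))) := Nat.mul_le_mul_left _ hc
    _ = m * (d * N * (L / (d * N)) + (d * N * (L' / D) + 3 * (d * N))) := by ring
    _ ≤ m * (L + L') := by gcongr

end BlockCounting

theorem one_sub_div_sqrt_lt_one_sub_div {N : ℕ} {m x : ℝ} (hN : 3 ≤ N) (hx : 0 < x)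
    (h : N * m ≤ 3 * x) : 1 - 4 / √N < 1 - 2 * m / x := by
  have hN0 : (0 : ℝ) < N := by positivity
  have hN3 : (3 : ℝ) ≤ N := by exact_mod_cast hN
  have hsqrt : 3 / 2 < √(N : ℝ) := Real.lt_sqrt_of_sq_lt (by linarith)
  have hsq : √(N : ℝ) * √N = N := Real.mul_self_sqrt hN0.le
  have h1 : 2 * m / x ≤ 6 / N := by
    rw [div_le_div_iff₀ hx hN0]; linarith
  have h2 : (6 : ℝ) / N < 4 / √N := by
    rw [div_lt_div_iff₀ hN0 (by linarith)]; nlinarith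
  linarith

namespace Paper

theorem IsApproxMatch.mul_length_le_of_lt {σ : Type*} {N M j k : ℕ} (hN : 4 ≤ N)
    (hkM : k ≤ M) (hjk : j < k) {a : Fin N → σ} (ha : Function.Injective a) {B Bb : List σ}
    (hB : B <:+: feldmanPattern N a j M) (hBb : Bb <:+: feldmanPattern N a k M)
    (hBblen : N ^ (2 * M + 2) ≤ Bb.length) {I : List (ℕ × ℕ)} (hI : IsApproxMatch B Bb I) :
    N * I.length ≤ 3 * (B.length + Bb.length) := by
  have hN0 : 0 < N := by omega
  obtain ⟨o, hBo⟩ := exists_getElem?_eq_of_infix_feldmanPattern hN0 hB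
  obtain ⟨o', hBbo⟩ := exists_getElem?_eq_of_infix_feldmanPattern hN0 hBb
  have hmem : ∀ p ∈ I.toFinset, p.1 < B.length ∧ p.2 < Bb.length ∧ B[p.1]? = Bb[p.2]? :=
    fun p hp => hI.2.1 p (List.mem_toFinset.1 hp)
  have hsym : ∀ p ∈ I.toFinset,
      (p.1 + o) / N ^ (2 * j) % N = (p.2 + o') / N ^ (2 * k) % N := by
    intro p hp
    obtain ⟨h1, h2, heq⟩ := hmem p hp
    rw [hBo _ h1, hBbo _ h2, Option.some_inj] at heq
    exact congr(Fin.val $(ha heq))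
  have hscale : N ^ (2 * j) * N * N ≤ N ^ (2 * k) := by
    rw [mul_assoc, ← sq, ← pow_add]
    exact Nat.pow_le_pow_right hN0 (by omega)
  have hlong : N ^ (2 * j) * N * N ≤ Bb.length :=
    hscale.trans ((Nat.pow_le_pow_right hN0 (by omega)).trans hBblen)
  refine mul_le_of_le_mul_div_add_div hN hscale hlong ?_
  rw [← List.toFinset_card_of_nodup hI.pairwise_lt.nodup]
  exact card_le_of_div_mod_eq (by positivity) (by simpa using hI.isChain_le)
    (fun p hp => ⟨(hmem p hp).1, (hmem p hp).2.1⟩) hsym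
    fun p hp => hI.card_filter_fst_eq_le_three (List.mem_toFinset.1 hp)

theorem IsApproxMatch.mul_length_le {σ : Type*} {N M j k : ℕ} (hN : 4 ≤ N) (hjM : j ≤ M)
    (hkM : k ≤ M) (hjk : j ≠ k) {a : Fin N → σ} (ha : Function.Injective a) {B Bb : List σ}
    (hB : B <:+: feldmanPattern N a j M) (hBb : Bb <:+: feldmanPattern N a k M)
    (hBlen : N ^ (2 * M + 2) ≤ B.length) (hBblen : N ^ (2 * M + 2) ≤ Bb.length)
    {I : List (ℕ × ℕ)} (hI : IsApproxMatch B Bb I) :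
    N * I.length ≤ 3 * (B.length + Bb.length) := by
  rcases hjk.lt_or_gt with hlt | hlt
  · exact hI.mul_length_le_of_lt hN hkM hlt ha hB hBb hBblen
  · simpa [add_comm] using hI.swap.mul_length_le_of_lt hN hjM hlt ha hBb hB hBlen

end Paper

theorem statement13_general {σ : Type*} (N M : ℕ) (hN : 20 ≤ N)
    (a : Fin N → σ) (ha : Function.Injective a)
    (j k : ℕ) (hjM : j ≤ M) (hkM : k ≤ M) (hjk : j ≠ k)
    (B Bb : List σ) (hB : B <:+: feldmanPattern N a j M) (hBb : Bb <:+: feldmanPattern N a k M)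
    (hBlen : N ^ (2 * M + 2) ≤ B.length) (hBblen : N ^ (2 * M + 2) ≤ Bb.length) :
    1 - 4 / Real.sqrt N < fbar B Bb ∧ 1 - 12 / Real.sqrt N < ftilde B Bb := by
  have hbound : ∀ I, IsApproxMatch B Bb I → N * I.length ≤ 3 * (B.length + Bb.length) :=
    fun I hI => hI.mul_length_le (by omega) hjM hkM hjk ha hB hBb hBlen hBblen
  have hpos : (0 : ℝ) < B.length + Bb.length := by
    have : 0 < B.length := (Nat.pow_pos (by omega)).trans_le hBlen
    positivity
  refine ⟨one_sub_div_sqrt_lt_one_sub_div (by omega) hpos ?_, ?_⟩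
  · exact_mod_cast mul_maxMatch_le (by omega) hbound
  calc 1 - 12 / √(N : ℝ) < 1 - 4 / √N := by gcongr; norm_num
    _ < 1 - 2 * maxApproxMatch B Bb / (B.length + Bb.length) :=
      one_sub_div_sqrt_lt_one_sub_div (by omega) hpos
        (by exact_mod_cast mul_maxApproxMatch_le (by omega) hbound)
    _ ≤ ftilde B Bb := le_max_right _ _

/-- Let `a₁, …, a_N` be distinct symbols, `N ≥ 20`, `M ≥ 2`, and let
`B_j` be the Feldman patterns. If `B` and `B̄` are consecutive substrings of `B_j` and
`B_k` with `j ≠ k`, `1 ≤ j, k ≤ M`, of lengths at least `N^{2M+2}`, then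
`f̄(B,B̄) > 1 − 4/√N` and `f̃(B,B̄) > 1 − 12/√N`. -/
theorem statement13 {σ : Type*} (N M : ℕ) (hN : 20 ≤ N) (hM : 2 ≤ M)
    (a : Fin N → σ) (ha : Function.Injective a)
    (j k : ℕ) (hj1 : 1 ≤ j) (hjM : j ≤ M) (hk1 : 1 ≤ k) (hkM : k ≤ M) (hjk : j ≠ k)
    (B Bb : List σ) (hB : B <:+: feldmanPattern N a j M) (hBb : Bb <:+: feldmanPattern N a k M)
    (hBlen : N ^ (2 * M + 2) ≤ B.length) (hBblen : N ^ (2 * M + 2) ≤ Bb.length) :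
    1 - 4 / Real.sqrt N < fbar B Bb ∧ 1 - 12 / Real.sqrt N < ftilde B Bb :=
  statement13_general N M hN a ha j k hjM hkM hjk B Bb hB hBb hBlen hBblen
end

section
/- Let α ∈ (0, 1/7), let q, l, R be positive integers with l ≥ 2, let Σ be an alphabet containing two distinguished symbols b and e, and let B_j and B_k be strings over Σ, each of length q, such that f̄(A, Ā) > α for any strings A and Ā of at least q/R consecutive symbols from B_j and B_k respectively. Then for any p_1, p_2 ∈ {0, 1, …, q−1} and any strings D and D̄ of at least q·l/R consecutive symbols from b^{q−p_1}(B_j)^{l−1}e^{p_1} and b^{q−p_2}(B_k)^{l−1}e^{p_2} respectively, we have f̄(D, D̄) > α − 2/R − 4R/l. -/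
open MeasureTheory

/-!
Take a maximal match between `D` and `D̄` and read it inside the two ambient words. Each ambient
word has only `q` spacer symbols (`b^{q-p}` and `e^p`), so at most `2q` matched pairs touch a
spacer; the others pair positions of the periodic parts `Bj^{l-1}` and `Bk^{l-1}`. Cut those
pairs into maximal runs that stay inside one copy of `Bj` and one copy of `Bk`. On a run the
separation hypothesis gives at most `(1 - α)/2` pairs per symbol of the windows it spans, up to
an error `q/R` when a window is shorter than `q/R`. The runs move monotonically through the
copies, so there are at most `|D|/q + |D̄|/q + 3` of them. Altogether
`maxMatch D D̄ ≤ (1 - α)/2 · N + N/R + 3q/R + 2q` with `N = |D| + |D̄| ≥ 2ql/R`, which gives the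
claim once `R ≥ 2`; for `R = 1` the claimed bound is negative.
-/

namespace Paper

variable {σ : Type*}

theorem length_le_card_of_nodup_map {ι : Type*} {L : List ι} {f : ι → ℕ}
    (hf : (L.map f).Nodup) {s : Finset ℕ} (hs : ∀ x ∈ L, f x ∈ s) : L.length ≤ s.card := by
  rw [← L.length_map (f := f), ← List.toFinset_card_of_nodup hf]
  refine Finset.card_le_card fun y hy => ?_
  obtain ⟨x, hx, rfl⟩ := List.mem_map.1 (List.mem_toFinset.1 hy)
  exact hs x hx

theorem length_filter_notMem_Ico_le {ι : Type*} {L : List ι} {f : ι → ℕ}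
    (hf : (L.map f).Nodup) {N a b : ℕ} (hbN : b ≤ N) (hL : ∀ x ∈ L, f x < N) :
    (L.filter fun x => f x ∉ Finset.Ico a b).length ≤ N - (b - a) := by
  have hsub : Finset.Ico a b ⊆ Finset.range N := fun x hx => by
    simp only [Finset.mem_Ico, Finset.mem_range] at hx ⊢; omega
  calc (L.filter fun x => f x ∉ Finset.Ico a b).length
      ≤ (Finset.range N \ Finset.Ico a b).card := by
        refine length_le_card_of_nodup_map (hf.sublist (List.filter_sublist.map f)) ?_
        intro x hx
        obtain ⟨hx, hxab⟩ := List.mem_filter.1 hx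
        exact Finset.mem_sdiff.2 ⟨Finset.mem_range.2 (hL x hx), of_decide_eq_true hxab⟩
    _ = N - (b - a) := by
        rw [Finset.card_sdiff_of_subset hsub, Finset.card_range, Nat.card_Ico]

theorem length_le_length_filter_and_add {ι : Type*} (L : List ι) (P Q : ι → Prop)
    [DecidablePred P] [DecidablePred Q] :
    L.length ≤ (L.filter fun x => P x ∧ Q x).length + (L.filter fun x => ¬P x).length +
      (L.filter fun x => ¬Q x).length := by
  induction L with
  | nil => simp
  | cons x L ih =>
    rw [List.filter_cons, List.filter_cons, List.filter_cons]
    by_cases hP : P x <;> by_cases hQ : Q x <;> simp only [hP, hQ, decide_true, decide_false,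
      not_true_eq_false, not_false_eq_true, and_self, and_true, and_false,
      if_true, if_false, Bool.false_eq_true, List.length_cons] <;> omega

theorem exists_eq_append_forall_head?_not {ι : Type*} (P : ι → Prop) [DecidablePred P]
    (K : List ι) : ∃ C rest, K = C ++ rest ∧ (∀ p ∈ C, P p) ∧ ∀ r ∈ rest.head?, ¬P r := by
  refine ⟨K.takeWhile fun p => P p, K.dropWhile fun p => P p,
    List.takeWhile_append_dropWhile.symm,
    fun p hp => of_decide_eq_true (List.mem_takeWhile_imp (p := fun p => decide (P p)) hp),
    fun r hr => ?_⟩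
  have := List.head?_dropWhile_not (fun p => decide (P p)) K
  rw [Option.mem_def.1 hr] at this
  exact of_decide_eq_false this

theorem extract_isInfix (l : List σ) (i j : ℕ) : l.extract i j <:+: l :=
  (List.take_prefix _ _).isInfix.trans (List.drop_suffix _ _).isInfix

theorem mod_eq_mod_add_sub_of_div_eq {x g y q : ℕ} (hxg : x ≤ g) (hgy : g ≤ y)
    (h : x / q = y / q) : g % q = x % q + (g - x) := by
  have hg : g / q = x / q :=
    le_antisymm (h ▸ Nat.div_le_div_right hgy) (Nat.div_le_div_right hxg)
  have hg' := Nat.div_add_mod g q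
  have hx' := Nat.div_add_mod x q
  rw [hg] at hg'
  omega

def BothLt (p q : ℕ × ℕ) : Prop := p.1 < q.1 ∧ p.2 < q.2

theorem BothLt.le {p q : ℕ × ℕ} (h : BothLt p q) : p ≤ q := ⟨h.1.le, h.2.le⟩

instance : IsTrans (ℕ × ℕ) BothLt := ⟨fun _ _ _ h h' => ⟨h.1.trans h'.1, h.2.trans h'.2⟩⟩

theorem head_le_and_le_getLast_of_pairwise {a : ℕ × ℕ} {L : List (ℕ × ℕ)}
    (h : (a :: L).Pairwise BothLt) {p : ℕ × ℕ} (hp : p ∈ a :: L) :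
    a ≤ p ∧ p ≤ (a :: L).getLast (List.cons_ne_nil a L) := by
  refine ⟨?_, ?_⟩
  · rcases List.mem_cons.1 hp with rfl | hp
    · exact le_rfl
    · exact (List.rel_of_pairwise_cons h hp).le
  · have hsplit := List.dropLast_append_getLast (List.cons_ne_nil a L)
    rw [← hsplit] at h hp
    rcases List.mem_append.1 hp with hp | hp
    · exact (List.pairwise_append.1 h).2.2 p hp _ (List.mem_singleton_self _) |>.le
    · rw [List.mem_singleton.1 hp]

theorem nodup_map_fst_of_pairwise {I : List (ℕ × ℕ)} (hI : I.Pairwise BothLt) :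
    (I.map Prod.fst).Nodup :=
  List.pairwise_map.2 (hI.imp fun h => h.1.ne)

theorem nodup_map_snd_of_pairwise {I : List (ℕ × ℕ)} (hI : I.Pairwise BothLt) :
    (I.map Prod.snd).Nodup :=
  List.pairwise_map.2 (hI.imp fun h => h.2.ne)

theorem IsMatch.pairwise {a b : List σ} {I : List (ℕ × ℕ)} (h : IsMatch a b I) :
    I.Pairwise BothLt :=
  (List.isChain_iff_pairwise (R := BothLt)).1 h.1

theorem isMatch_of_pairwise {a b : List σ} {I : List (ℕ × ℕ)} (hI : I.Pairwise BothLt)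
    (h : ∀ p ∈ I, p.1 < a.length ∧ p.2 < b.length ∧ a[p.1]? = b[p.2]?) : IsMatch a b I :=
  ⟨(List.isChain_iff_pairwise (R := BothLt)).2 hI, h⟩

theorem IsMatch.length_le_left {a b : List σ} {I : List (ℕ × ℕ)} (h : IsMatch a b I) :
    I.length ≤ a.length := by
  simpa using length_le_card_of_nodup_map (nodup_map_fst_of_pairwise h.pairwise)
    (s := Finset.range a.length) fun p hp => Finset.mem_range.2 (h.2 p hp).1

theorem IsMatch.length_le_right {a b : List σ} {I : List (ℕ × ℕ)} (h : IsMatch a b I) :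
    I.length ≤ b.length := by
  simpa using length_le_card_of_nodup_map (nodup_map_snd_of_pairwise h.pairwise)
    (s := Finset.range b.length) fun p hp => Finset.mem_range.2 (h.2 p hp).2.1

theorem bddAbove_matchLengths (a b : List σ) :
    BddAbove {r | ∃ I, IsMatch a b I ∧ I.length = r} :=
  ⟨a.length, by rintro _ ⟨I, hI, rfl⟩; exact hI.length_le_left⟩

theorem exists_isMatch_length_eq_maxMatch (a b : List σ) :
    ∃ I, IsMatch a b I ∧ I.length = maxMatch a b :=
  Nat.sSup_mem (s := {r | ∃ I, IsMatch a b I ∧ I.length = r})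
    ⟨0, [], isMatch_of_pairwise List.Pairwise.nil (by simp), rfl⟩ (bddAbove_matchLengths a b)

theorem IsMatch.length_le_maxMatch {a b : List σ} {I : List (ℕ × ℕ)} (h : IsMatch a b I) :
    I.length ≤ maxMatch a b :=
  le_csSup (bddAbove_matchLengths a b) ⟨I, h, rfl⟩

theorem maxMatch_le_left (a b : List σ) : maxMatch a b ≤ a.length := by
  obtain ⟨I, hI, hlen⟩ := exists_isMatch_length_eq_maxMatch a b
  exact hlen ▸ hI.length_le_left

theorem maxMatch_le_right (a b : List σ) : maxMatch a b ≤ b.length := by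
  obtain ⟨I, hI, hlen⟩ := exists_isMatch_length_eq_maxMatch a b
  exact hlen ▸ hI.length_le_right

theorem fbar_nonneg (a b : List σ) : 0 ≤ fbar a b := by
  have ha : (maxMatch a b : ℝ) ≤ a.length := by exact_mod_cast maxMatch_le_left a b
  have hb : (maxMatch a b : ℝ) ≤ b.length := by exact_mod_cast maxMatch_le_right a b
  rw [fbar, sub_nonneg]
  exact div_le_one_of_le₀ (by linarith) (by positivity)

theorem length_le_maxMatch_extract {a b : List σ} {J : List (ℕ × ℕ)}
    (hJ : J.Pairwise BothLt) (hab : ∀ p ∈ J, a[p.1]? = b[p.2]?) {x y : ℕ × ℕ}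
    (hbox : ∀ p ∈ J, x ≤ p ∧ p ≤ y) (hya : y.1 < a.length) (hyb : y.2 < b.length) :
    J.length ≤ maxMatch (a.extract x.1 (y.1 + 1)) (b.extract x.2 (y.2 + 1)) := by
  rw [← J.length_map (f := fun p => (p.1 - x.1, p.2 - x.2))]
  refine IsMatch.length_le_maxMatch (isMatch_of_pairwise ?_ ?_)
  · refine List.pairwise_map.2 (hJ.imp_of_mem fun hp hp' hlt => ?_)
    obtain ⟨hlt₁, hlt₂⟩ := hlt
    obtain ⟨⟨_, _⟩, -⟩ := hbox _ hp
    obtain ⟨⟨_, _⟩, -⟩ := hbox _ hp'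
    exact ⟨by dsimp only; omega, by dsimp only; omega⟩
  · simp only [List.mem_map]
    rintro _ ⟨p, hp, rfl⟩
    obtain ⟨⟨h₁, h₂⟩, _, _⟩ := hbox p hp
    simp only [List.extract_eq_take_drop, List.length_take, List.length_drop,
      List.getElem?_take, List.getElem?_drop]
    refine ⟨by omega, by omega, ?_⟩
    rw [if_pos (by omega), if_pos (by omega), Nat.add_sub_cancel' h₁, Nat.add_sub_cancel' h₂]
    exact hab p hp

theorem exists_isMatch_of_isInfix {a b a' b' : List σ} (ha : a <:+: a') (hb : b <:+: b') :
    ∃ (I : List (ℕ × ℕ)) (k k' : ℕ), IsMatch a' b' I ∧ I.length = maxMatch a b ∧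
      ∀ p ∈ I, (k, k') ≤ p ∧ p ≤ (k + a.length - 1, k' + b.length - 1) := by
  obtain ⟨I, hI, hlen⟩ := exists_isMatch_length_eq_maxMatch a b
  obtain ⟨k, hk, ha'⟩ := List.infix_iff_getElem?.1 ha
  obtain ⟨k', hk', hb'⟩ := List.infix_iff_getElem?.1 hb
  refine ⟨I.map fun p => (p.1 + k, p.2 + k'), k, k', isMatch_of_pairwise ?_ ?_,
    by simp [hlen], ?_⟩
  · exact List.pairwise_map.2 (hI.pairwise.imp fun h => ⟨by simp [h.1], by simp [h.2]⟩)
  · simp only [List.mem_map]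
    rintro _ ⟨p, hp, rfl⟩
    obtain ⟨h₁, h₂, h⟩ := hI.2 p hp
    refine ⟨by omega, by omega, ?_⟩
    rw [ha' _ h₁, hb' _ h₂, ← List.getElem?_eq_getElem, ← List.getElem?_eq_getElem, h]
  · simp only [List.mem_map]
    rintro _ ⟨p, hp, rfl⟩
    obtain ⟨h₁, h₂, -⟩ := hI.2 p hp
    exact ⟨⟨by dsimp only; omega, by dsimp only; omega⟩, by dsimp only; omega,
      by dsimp only; omega⟩

def Separated (α L : ℝ) (B B' : List σ) : Prop :=
  ∀ A A' : List σ, A <:+: B → A' <:+: B' → L ≤ A.length → L ≤ A'.length → α < fbar A A'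

theorem Separated.maxMatch_le {α L : ℝ} {B B' A A' : List σ} (hsep : Separated α L B B')
    (hα : α ≤ 1) (hL : 0 ≤ L) (hA : A <:+: B) (hA' : A' <:+: B') :
    (maxMatch A A' : ℝ) ≤ (1 - α) / 2 * (A.length + A'.length) + L := by
  have hM : (maxMatch A A' : ℝ) ≤ A.length := by exact_mod_cast maxMatch_le_left A A'
  have hM' : (maxMatch A A' : ℝ) ≤ A'.length := by exact_mod_cast maxMatch_le_right A A'
  have hspan : 0 ≤ (1 - α) / 2 * ((A.length : ℝ) + A'.length) := by
    apply mul_nonneg <;> [linarith; positivity]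
  by_cases hlong : L ≤ A.length ∧ L ≤ A'.length
  · rcases (Nat.cast_nonneg (α := ℝ) A.length).eq_or_lt' with hA0 | hApos
    · linarith
    have hfbar := hsep A A' hA hA' hlong.1 hlong.2
    rw [fbar, lt_sub_iff_add_lt, ← lt_sub_iff_add_lt', div_lt_iff₀ (by positivity)] at hfbar
    linarith
  · rw [not_and_or, not_le, not_le] at hlong
    rcases hlong with h | h <;> linarith

def span (x y : ℕ × ℕ) : ℕ := (y.1 + 1 - x.1) + (y.2 + 1 - x.2)

def blockCount (q : ℕ) (x y : ℕ × ℕ) : ℕ := (y.1 / q - x.1 / q) + (y.2 / q - x.2 / q) + 1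

/-- A chain of pairs inside the box `[x, y]` meets at most `blockCount q x y` pairs of
`q`-blocks; in each it gains `(1 - α)/2` per symbol spanned plus the short-window error `q/R`. -/
noncomputable def periodicMatchBound (α : ℝ) (q R : ℕ) (x y : ℕ × ℕ) : ℝ :=
  (1 - α) / 2 * span x y + q / R * blockCount q x y

theorem periodicMatchBound_nonneg {α : ℝ} {q R : ℕ} (hα : α ≤ 1) {x y : ℕ × ℕ} :
    0 ≤ periodicMatchBound α q R x y :=
  add_nonneg (mul_nonneg (by linarith) (Nat.cast_nonneg _)) (by positivity)

theorem span_le_span {x a c y : ℕ × ℕ} (hxa : x ≤ a) (hcy : c ≤ y) :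
    span a c ≤ span x y := by
  obtain ⟨_, _⟩ := hxa
  obtain ⟨_, _⟩ := hcy
  unfold span
  omega

theorem span_add_span_le {x a c r y : ℕ × ℕ} (hxa : x ≤ a) (hac : a ≤ c) (hcr : BothLt c r)
    (hry : r ≤ y) : span a c + span r y ≤ span x y := by
  obtain ⟨_, _⟩ := hxa
  obtain ⟨_, _⟩ := hac
  obtain ⟨_, _⟩ := hcr
  obtain ⟨_, _⟩ := hry
  unfold span
  omega

theorem blockCount_lt {q : ℕ} {x a c r y : ℕ × ℕ} (hxa : x ≤ a) (hac : a ≤ c)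
    (hcr : BothLt c r) (hry : r ≤ y) (hblock : ¬(r.1 / q = a.1 / q ∧ r.2 / q = a.2 / q)) :
    blockCount q r y < blockCount q x y := by
  have hx₁ := Nat.div_le_div_right (c := q) hxa.1
  have hx₂ := Nat.div_le_div_right (c := q) hxa.2
  have hr₁ := Nat.div_le_div_right (c := q) (hac.1.trans hcr.1.le)
  have hr₂ := Nat.div_le_div_right (c := q) (hac.2.trans hcr.2.le)
  have hy₁ := Nat.div_le_div_right (c := q) hry.1
  have hy₂ := Nat.div_le_div_right (c := q) hry.2
  unfold blockCount
  omega

theorem run_le_periodicMatchBound {α : ℝ} {q R : ℕ} (hα : α ≤ 1) {x a c y : ℕ × ℕ}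
    (hxa : x ≤ a) (hcy : c ≤ y) :
    (1 - α) / 2 * span a c + q / R ≤ periodicMatchBound α q R x y := by
  have hspan : (span a c : ℝ) ≤ span x y := by exact_mod_cast span_le_span hxa hcy
  have hblocks : (1 : ℝ) ≤ blockCount q x y := by exact_mod_cast Nat.le_add_left 1 _
  have hα' : 0 ≤ (1 - α) / 2 := by linarith
  have hqR : 0 ≤ (q : ℝ) / R := by positivity
  unfold periodicMatchBound
  nlinarith

theorem run_add_periodicMatchBound_le {α : ℝ} {q R : ℕ} (hα : α ≤ 1) {x a c r y : ℕ × ℕ}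
    (hxa : x ≤ a) (hac : a ≤ c) (hcr : BothLt c r) (hry : r ≤ y)
    (hblock : ¬(r.1 / q = a.1 / q ∧ r.2 / q = a.2 / q)) :
    (1 - α) / 2 * span a c + q / R + periodicMatchBound α q R r y ≤
      periodicMatchBound α q R x y := by
  have hspan : (span a c : ℝ) + span r y ≤ span x y := by
    exact_mod_cast span_add_span_le hxa hac hcr hry
  have hblocks : (blockCount q r y : ℝ) + 1 ≤ blockCount q x y := by
    exact_mod_cast blockCount_lt hxa hac hcr hry hblock
  have hα' : 0 ≤ (1 - α) / 2 := by linarith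
  have hqR : 0 ≤ (q : ℝ) / R := by positivity
  unfold periodicMatchBound
  nlinarith

theorem periodicMatchBound_le {α : ℝ} {q R : ℕ} (hα : α ≤ 1) (hq : 0 < q) {x y : ℕ × ℕ} {n m : ℕ}
    (hn : y.1 < x.1 + n) (hm : y.2 < x.2 + m) :
    periodicMatchBound α q R x y ≤ (1 - α) / 2 * (n + m) + (n + m) / R + 3 * q / R := by
  have hspan : (span x y : ℝ) ≤ n + m := by
    exact_mod_cast (show span x y ≤ n + m by unfold span; omega)
  have hblocks : blockCount q x y ≤ n / q + m / q + 3 := by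
    have h₁ := (Nat.div_le_div_right (c := q) hn.le).trans
      (Nat.add_div_le_div_add_div_add_one x.1 n q)
    have h₂ := (Nat.div_le_div_right (c := q) hm.le).trans
      (Nat.add_div_le_div_add_div_add_one x.2 m q)
    unfold blockCount
    generalize n / q = N at *
    generalize m / q = M at *
    omega
  have hblocks' : (blockCount q x y : ℝ) ≤ n / q + m / q + 3 := by
    have := Nat.cast_div_le (α := ℝ) (m := n) (n := q)
    have := Nat.cast_div_le (α := ℝ) (m := m) (n := q)
    have : (blockCount q x y : ℝ) ≤ (n / q : ℕ) + (m / q : ℕ) + 3 := by exact_mod_cast hblocks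
    linarith
  have hq' : (0 : ℝ) < q := by exact_mod_cast hq
  calc periodicMatchBound α q R x y
      ≤ (1 - α) / 2 * (n + m) + q / R * (n / q + m / q + 3) := by
        unfold periodicMatchBound
        gcongr
    _ = (1 - α) / 2 * (n + m) + (n + m) / R + 3 * q / R := by
        field_simp
        ring

section Periodic

variable {α : ℝ} {q R : ℕ} {Bj Bk : List σ}

theorem length_le_of_sameBlock (hα : α ≤ 1) (hq : 0 < q) (hBj : Bj.length = q)
    (hBk : Bk.length = q) (hsep : Separated α (q / R) Bj Bk) {J : List (ℕ × ℕ)}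
    (hJ : J.Pairwise BothLt) (hsym : ∀ p ∈ J, Bj[p.1 % q]? = Bk[p.2 % q]?) {x y : ℕ × ℕ}
    (hbox : ∀ p ∈ J, x ≤ p ∧ p ≤ y) (hxy : x ≤ y) (h₁ : x.1 / q = y.1 / q)
    (h₂ : x.2 / q = y.2 / q) :
    (J.length : ℝ) ≤ (1 - α) / 2 * span x y + q / R := by
  have hmod : ∀ p ∈ J, p.1 % q = x.1 % q + (p.1 - x.1) ∧ p.2 % q = x.2 % q + (p.2 - x.2) :=
    fun p hp => ⟨mod_eq_mod_add_sub_of_div_eq (hbox p hp).1.1 (hbox p hp).2.1 h₁,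
      mod_eq_mod_add_sub_of_div_eq (hbox p hp).1.2 (hbox p hp).2.2 h₂⟩
  have hy₁ := mod_eq_mod_add_sub_of_div_eq hxy.1 le_rfl h₁
  have hy₂ := mod_eq_mod_add_sub_of_div_eq hxy.2 le_rfl h₂
  have hpair : (J.map fun p => (p.1 % q, p.2 % q)).Pairwise BothLt := by
    refine List.pairwise_map.2 (hJ.imp_of_mem fun hp hp' hlt => ?_)
    obtain ⟨hlt₁, hlt₂⟩ := hlt
    obtain ⟨⟨_, _⟩, -⟩ := hbox _ hp
    obtain ⟨_, _⟩ := hmod _ hp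
    obtain ⟨_, _⟩ := hmod _ hp'
    exact ⟨by omega, by omega⟩
  have hsym' : ∀ p ∈ J.map fun p => (p.1 % q, p.2 % q), Bj[p.1]? = Bk[p.2]? := by
    simp only [List.mem_map]
    rintro _ ⟨p, hp, rfl⟩
    exact hsym p hp
  have hbox' : ∀ p ∈ J.map fun p => (p.1 % q, p.2 % q),
      (x.1 % q, x.2 % q) ≤ p ∧ p ≤ (y.1 % q, y.2 % q) := by
    simp only [List.mem_map]
    rintro _ ⟨p, hp, rfl⟩
    obtain ⟨⟨_, _⟩, _, _⟩ := hbox p hp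
    obtain ⟨_, _⟩ := hmod p hp
    exact ⟨⟨by dsimp only; omega, by dsimp only; omega⟩, by dsimp only; omega,
      by dsimp only; omega⟩
  have hlen := length_le_maxMatch_extract hpair hsym' hbox'
    (by rw [hBj]; exact Nat.mod_lt _ hq) (by rw [hBk]; exact Nat.mod_lt _ hq)
  have hM := hsep.maxMatch_le hα (by positivity)
    (extract_isInfix Bj (x.1 % q) (y.1 % q + 1)) (extract_isInfix Bk (x.2 % q) (y.2 % q + 1))
  have hspan : (Bj.extract (x.1 % q) (y.1 % q + 1)).length +
      (Bk.extract (x.2 % q) (y.2 % q + 1)).length = span x y := by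
    have hy₁q := Nat.mod_lt y.1 hq
    have hy₂q := Nat.mod_lt y.2 hq
    simp only [List.extract_eq_take_drop, List.length_take, List.length_drop, hBj, hBk, span]
    obtain ⟨_, _⟩ := hxy
    omega
  rw [List.length_map] at hlen
  dsimp only at hlen
  rw [← hspan, Nat.cast_add]
  exact (Nat.cast_le.2 hlen).trans hM

/-- Split off the maximal initial run of `K` lying in the block pair of its head; the separation
hypothesis bounds the run, and the remainder starts in a strictly later block pair. -/
theorem length_le_periodicMatchBound (hα : α ≤ 1) (hq : 0 < q) (hBj : Bj.length = q)
    (hBk : Bk.length = q) (hsep : Separated α (q / R) Bj Bk) :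
    ∀ K : List (ℕ × ℕ), K.Pairwise BothLt → (∀ p ∈ K, Bj[p.1 % q]? = Bk[p.2 % q]?) →
      ∀ x y : ℕ × ℕ, (∀ p ∈ K, x ≤ p ∧ p ≤ y) →
        (K.length : ℝ) ≤ periodicMatchBound α q R x y
  | [], _, _, _, _, _ => by simpa using periodicMatchBound_nonneg hα
  | a :: K, hK, hsym, x, y, hbox => by
    obtain ⟨C, rest, hsplit, hCblock, hnext⟩ :=
      exists_eq_append_forall_head?_not (fun p => p.1 / q = a.1 / q ∧ p.2 / q = a.2 / q) K
    rw [hsplit, ← List.cons_append] at hK hsym hbox ⊢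
    have hmem : ∀ p, p ∈ a :: C ∨ p ∈ rest → p ∈ a :: C ++ rest := fun p hp =>
      List.mem_append.2 hp
    obtain ⟨hC, hrest, hCrest⟩ := List.pairwise_append.1 hK
    set c := (a :: C).getLast (List.cons_ne_nil _ _)
    have hc : c ∈ a :: C := List.getLast_mem _
    have hCbox := fun p (hp : p ∈ a :: C) => head_le_and_le_getLast_of_pairwise hC hp
    have hcblock : a.1 / q = c.1 / q ∧ a.2 / q = c.2 / q := by
      rcases List.mem_cons.1 hc with hca | hc'
      · rw [← hca]; exact ⟨rfl, rfl⟩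
      · exact (hCblock c hc').imp Eq.symm Eq.symm
    have hrun := length_le_of_sameBlock hα hq hBj hBk hsep hC
      (fun p hp => hsym p (hmem p (.inl hp))) hCbox (hCbox c hc).1 hcblock.1 hcblock.2
    have hxa := (hbox a List.mem_cons_self).1
    have hcy := (hbox c (hmem c (.inl hc))).2
    rw [List.length_append, Nat.cast_add]
    cases rest with
    | nil =>
      have := run_le_periodicMatchBound (q := q) (R := R) hα hxa hcy
      rw [List.length_nil, Nat.cast_zero, add_zero]
      linarith
    | cons r rest =>
      have hr : r ∈ r :: rest := List.mem_cons_self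
      have hrest_le := length_le_periodicMatchBound hα hq hBj hBk hsep (r :: rest) hrest
        (fun p hp => hsym p (hmem p (.inr hp))) r y fun p hp =>
          ⟨(head_le_and_le_getLast_of_pairwise hrest hp).1, (hbox p (hmem p (.inr hp))).2⟩
      have := run_add_periodicMatchBound_le (R := R) hα hxa (hCbox c hc).1
        (hCrest c hc r hr) (hbox r (hmem r (.inr hr))).2 (hnext r rfl)
      linarith
termination_by K => K.length
decreasing_by
  have := congrArg List.length hsplit
  simp only [List.length_cons, List.length_append] at this ⊢
  omega

theorem length_filter_mem_Ico_le_periodicMatchBound (hα : α ≤ 1) (hq : 0 < q) (hBj : Bj.length = q)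
    (hBk : Bk.length = q) (hsep : Separated α (q / R) Bj Bk) {W W' : List σ}
    {c d c' d' : ℕ} (hW : ∀ g, c ≤ g → g < d → W[g]? = Bj[(g - c) % q]?)
    (hW' : ∀ g, c' ≤ g → g < d' → W'[g]? = Bk[(g - c') % q]?) {I : List (ℕ × ℕ)}
    (hI : IsMatch W W' I) {x y : ℕ × ℕ} (hbox : ∀ p ∈ I, x ≤ p ∧ p ≤ y) :
    ((I.filter fun p => p.1 ∈ Finset.Ico c d ∧ p.2 ∈ Finset.Ico c' d').length : ℝ) ≤
      periodicMatchBound α q R (x.1 - c, x.2 - c') (y.1 - c, y.2 - c') := by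
  set J := I.filter fun p => p.1 ∈ Finset.Ico c d ∧ p.2 ∈ Finset.Ico c' d'
  have hJ : ∀ p ∈ J, p ∈ I ∧ c ≤ p.1 ∧ p.1 < d ∧ c' ≤ p.2 ∧ p.2 < d' := fun p hp => by
    simpa [J, and_assoc] using hp
  rw [← J.length_map (f := fun p => (p.1 - c, p.2 - c'))]
  refine length_le_periodicMatchBound hα hq hBj hBk hsep _ ?_ ?_ _ _ ?_
  · refine List.pairwise_map.2 ((hI.pairwise.sublist List.filter_sublist).imp_of_mem ?_)
    intro p p' hp hp' hlt
    obtain ⟨hlt₁, hlt₂⟩ := hlt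
    obtain ⟨-, _, -, _, -⟩ := hJ p hp
    exact ⟨by dsimp only; omega, by dsimp only; omega⟩
  · simp only [List.mem_map]
    rintro _ ⟨p, hp, rfl⟩
    obtain ⟨hpI, h₁, h₂, h₃, h₄⟩ := hJ p hp
    rw [← hW _ h₁ h₂, ← hW' _ h₃ h₄]
    exact (hI.2 p hpI).2.2
  · simp only [List.mem_map]
    rintro _ ⟨p, hp, rfl⟩
    obtain ⟨⟨_, _⟩, _, _⟩ := hbox p (hJ p hp).1
    exact ⟨⟨by dsimp only; omega, by dsimp only; omega⟩, by dsimp only; omega,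
      by dsimp only; omega⟩

end Periodic

theorem length_rep (w : List σ) (t : ℕ) : (rep w t).length = t * w.length := by
  simp [rep]

theorem getElem?_rep (w : List σ) {t i : ℕ} (hi : i < t * w.length) :
    (rep w t)[i]? = w[i % w.length]? := by
  induction t generalizing i with
  | zero => simp at hi
  | succ t ih =>
    rw [rep, List.replicate_succ, List.flatten_cons, ← rep]
    rcases Nat.lt_or_ge i w.length with h | h
    · rw [List.getElem?_append_left h, Nat.mod_eq_of_lt h]
    · rw [List.getElem?_append_right h, ih (by rw [Nat.succ_mul] at hi; omega),
        ← Nat.mod_eq_sub_mod h]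

theorem getElem?_replicate_append_rep_append (x z : σ) (B : List σ) (c t s : ℕ) {g : ℕ}
    (hcg : c ≤ g) (hg : g < c + t * B.length) :
    (List.replicate c x ++ rep B t ++ List.replicate s z)[g]? = B[(g - c) % B.length]? := by
  rw [List.getElem?_append_left (by simp [length_rep]; omega),
    List.getElem?_append_right (by simp; omega), List.length_replicate,
    getElem?_rep B (by omega)]

theorem maxMatch_le_of_isInfix_subsection {α : ℝ} {q R : ℕ} {Bj Bk : List σ} (hα : α ≤ 1)
    (hq : 0 < q) (hBj : Bj.length = q) (hBk : Bk.length = q)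
    (hsep : Separated α (q / R) Bj Bk) (b e : σ) {t p₁ p₂ : ℕ} (hp₁ : p₁ ≤ q) (hp₂ : p₂ ≤ q)
    {D Db : List σ} (hD : D <:+: List.replicate (q - p₁) b ++ rep Bj t ++ List.replicate p₁ e)
    (hDb : Db <:+: List.replicate (q - p₂) b ++ rep Bk t ++ List.replicate p₂ e)
    (hn : D ≠ []) (hm : Db ≠ []) :
    (maxMatch D Db : ℝ) ≤ (1 - α) / 2 * (D.length + Db.length) + (D.length + Db.length) / R +
      3 * q / R + 2 * q := by
  obtain ⟨I, k, k', hI, hlen, hbox⟩ := exists_isMatch_of_isInfix hD hDb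
  have hW := hI.2
  simp only [List.length_append, List.length_replicate, length_rep, hBj, hBk] at hW
  have hspacer₁ := length_filter_notMem_Ico_le (nodup_map_fst_of_pairwise hI.pairwise)
    (a := q - p₁) (b := q - p₁ + t * q) le_self_add fun p hp => (hW p hp).1
  have hspacer₂ := length_filter_notMem_Ico_le (nodup_map_snd_of_pairwise hI.pairwise)
    (a := q - p₂) (b := q - p₂ + t * q) le_self_add fun p hp => (hW p hp).2.1
  have hsplit := length_le_length_filter_and_add I
    (fun p => p.1 ∈ Finset.Ico (q - p₁) (q - p₁ + t * q))
    (fun p => p.2 ∈ Finset.Ico (q - p₂) (q - p₂ + t * q))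
  have hcount : (I.length : ℝ) ≤ (I.filter fun p => p.1 ∈ Finset.Ico (q - p₁) (q - p₁ + t * q) ∧
      p.2 ∈ Finset.Ico (q - p₂) (q - p₂ + t * q)).length + q + q := by
    exact_mod_cast hsplit.trans (by omega)
  have hperiodic := length_filter_mem_Ico_le_periodicMatchBound hα hq hBj hBk hsep
    (fun g h₁ h₂ => by
      rw [getElem?_replicate_append_rep_append b e Bj _ t p₁ h₁ (by rwa [hBj]), hBj])
    (fun g h₁ h₂ => by
      rw [getElem?_replicate_append_rep_append b e Bk _ t p₂ h₁ (by rwa [hBk]), hBk])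
    hI hbox
  have hbound := periodicMatchBound_le (R := R) hα hq (n := D.length) (m := Db.length)
    (x := (k - (q - p₁), k' - (q - p₂)))
    (y := (k + D.length - 1 - (q - p₁), k' + Db.length - 1 - (q - p₂)))
    (by have := List.length_pos_iff.2 hn; dsimp only; omega)
    (by have := List.length_pos_iff.2 hm; dsimp only; omega)
  rw [← hlen]
  linarith

theorem lt_fbar_of_maxMatch_le {α : ℝ} {q l R : ℕ} {D Db : List σ} (hq : 0 < q) (hl : 0 < l)
    (hR : 2 ≤ R) (hn : (q * l : ℝ) / R ≤ D.length) (hm : (q * l : ℝ) / R ≤ Db.length)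
    (hM : (maxMatch D Db : ℝ) ≤ (1 - α) / 2 * (D.length + Db.length) +
      (D.length + Db.length) / R + 3 * q / R + 2 * q) :
    α - 2 / R - 4 * R / l < fbar D Db := by
  have hq' : (0 : ℝ) < q := by exact_mod_cast hq
  have hl' : (0 : ℝ) < l := by exact_mod_cast hl
  have hR' : (2 : ℝ) ≤ R := by exact_mod_cast hR
  set N : ℝ := D.length + Db.length
  have hN : 2 * (q * l / R) ≤ N := by linarith
  have hNpos : 0 < N := lt_of_lt_of_le (by positivity) hN
  have hsmall : 6 * q / R + 4 * q < 4 * R / l * N := by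
    calc (6 * q / R + 4 * q : ℝ) ≤ 7 * q := by
          have : 6 * q / R ≤ (3 * q : ℝ) := by rw [div_le_iff₀ (by positivity)]; nlinarith
          linarith
      _ < 8 * q := by linarith
      _ = 4 * R / l * (2 * (q * l / R)) := by field_simp; ring
      _ ≤ 4 * R / l * N := by gcongr
  rw [fbar, lt_sub_comm, div_lt_iff₀ hNpos]
  have : (1 - (α - 2 / R - 4 * R / l)) * N =
      2 * ((1 - α) / 2 * N + N / R + 3 * q / R) - 6 * q / R + 4 * R / l * N := by ring
  linarith

end Paper

open Paper List

theorem statement15_general {σ : Type*} (α : ℝ) (hα' : α < 1/7)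
    (q l R : ℕ) (hq : 0 < q) (hl : 2 ≤ l) (hR : 0 < R)
    (b e : σ) (Bj Bk : List σ) (hBj : Bj.length = q) (hBk : Bk.length = q)
    (hsep : ∀ A Ab : List σ, A <:+: Bj → Ab <:+: Bk →
      (q : ℝ) / R ≤ A.length → (q : ℝ) / R ≤ Ab.length → α < fbar A Ab)
    (p₁ p₂ : ℕ) (hp₁ : p₁ < q) (hp₂ : p₂ < q)
    (D Db : List σ)
    (hD : D <:+: (List.replicate (q - p₁) b ++ Paper.rep Bj (l - 1) ++ List.replicate p₁ e))
    (hDb : Db <:+: (List.replicate (q - p₂) b ++ Paper.rep Bk (l - 1) ++ List.replicate p₂ e))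
    (hDlen : ((q * l : ℕ) : ℝ) / R ≤ D.length)
    (hDblen : ((q * l : ℕ) : ℝ) / R ≤ Db.length) :
    α - 2 / R - 4 * R / l < fbar D Db := by
  rcases Nat.lt_or_ge R 2 with hR₁ | hR₂
  · obtain rfl : R = 1 := by omega
    have := fbar_nonneg D Db
    have : (0 : ℝ) ≤ 4 * 1 / l := by positivity
    push_cast
    linarith
  push_cast at hDlen hDblen
  have hqlR : (0 : ℝ) < q * l / R := by
    have : 0 < l := by omega
    positivity
  refine lt_fbar_of_maxMatch_le hq (by omega) hR₂ hDlen hDblen ?_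
  exact maxMatch_le_of_isInfix_subsection (by linarith) hq hBj hBk hsep b e hp₁.le hp₂.le hD hDb
    (List.length_pos_iff.1 (by exact_mod_cast hqlR.trans_le hDlen))
    (List.length_pos_iff.1 (by exact_mod_cast hqlR.trans_le hDblen))

/-- Let `0 < α < 1/7`, let `q, l, R` be positive integers with `l ≥ 2`,
let `b, e` be two distinguished symbols, and let `Bj, Bk` be strings of length `q` such
that `f̄(A,Ā) > α` for all consecutive substrings `A` of `Bj` and `Ā` of `Bk` of length at
least `q/R`. Then for any `p₁, p₂ ∈ {0,…,q−1}` and any consecutive substrings `D` of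
`b^{q−p₁}(Bj)^{l−1}e^{p₁}` and `D̄` of `b^{q−p₂}(Bk)^{l−1}e^{p₂}` of length at least
`q·l/R`, we have `f̄(D,D̄) > α − 2/R − 4R/l`. -/
theorem statement15 {σ : Type*} (α : ℝ) (hα : 0 < α) (hα' : α < 1/7)
    (q l R : ℕ) (hq : 0 < q) (hl : 2 ≤ l) (hR : 0 < R)
    (b e : σ) (Bj Bk : List σ) (hBj : Bj.length = q) (hBk : Bk.length = q)
    (hsep : ∀ A Ab : List σ, A <:+: Bj → Ab <:+: Bk →
      (q : ℝ) / R ≤ A.length → (q : ℝ) / R ≤ Ab.length → α < fbar A Ab)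
    (p₁ p₂ : ℕ) (hp₁ : p₁ < q) (hp₂ : p₂ < q)
    (D Db : List σ)
    (hD : D <:+: (List.replicate (q - p₁) b ++ Paper.rep Bj (l - 1) ++ List.replicate p₁ e))
    (hDb : Db <:+: (List.replicate (q - p₂) b ++ Paper.rep Bk (l - 1) ++ List.replicate p₂ e))
    (hDlen : ((q * l : ℕ) : ℝ) / R ≤ D.length)
    (hDblen : ((q * l : ℕ) : ℝ) / R ≤ Db.length) :
    α - 2 / R - 4 * R / l < fbar D Db :=
  statement15_general α hα' q l R hq hl hR b e Bj Bk hBj hBk hsep p₁ p₂ hp₁ hp₂ D Db hD hDb hDlen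
    hDblen
end
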